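/- arXiv:1908.02518 — 9 statements merged into one kernel-verified Lean document; each statement's English description precedes it below -/
import Mathlib

section
/- Let F be a field, let I and J be finite linearly ordered index sets, and let D be an I × J matrix over F. Suppose indices i₀ ∈ I and j₀ ∈ J satisfy: D_{i₀ j₀} ≠ 0, D_{i j₀} = 0 for all i > i₀, and D_{i₀ j} = 0 for all j < j₀ (all entries of D below or to the left of the position (i₀, j₀) vanish). Then for every regular upper triangular J × J matrix V over F such that R = D·V is reduced, the column R_{j₀} is nonzero and its pivot index is i₀. -/
/-!
Write `R = D V`. Since `V` is upper triangular, `R i₀ j₀ = D i₀ j₀ * V j₀ j₀ ≠ 0`.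
Conversely `D = R V⁻¹`, so column `j₀` of `D` is a combination of columns of `R` in which
column `j₀` occurs with the nonzero coefficient `V⁻¹ j₀ j₀`. In a reduced matrix the nonzero
columns have distinct pivots, so such a combination is nonzero at the largest pivot involved;
a nonzero entry of `R` below `i₀` in column `j₀` would therefore produce one in column `j₀`
of `D`.
-/

/-- `i` is the pivot index of the column vector `v`: the largest index carrying
a nonzero entry (in particular `v ≠ 0`). -/
def IsPivot {I F : Type*} [LinearOrder I] [Zero F] (v : I → F) (i : I) : Prop :=
  v i ≠ 0 ∧ ∀ i', v i' ≠ 0 → i' ≤ i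

/-- A matrix is reduced if no two of its nonzero columns have the same pivot index. -/
def ReducedMat {I J F : Type*} [LinearOrder I] [Zero F] (M : Matrix I J F) : Prop :=
  ∀ j₁ j₂ i, IsPivot (fun r => M r j₁) i → IsPivot (fun r => M r j₂) i → j₁ = j₂

open Finset Matrix

theorem ReducedMat.exists_le_mulVec_ne_zero {I J F : Type*} [Fintype I] [Fintype J]
    [LinearOrder I] [Semiring F] [NoZeroDivisors F] {M : Matrix I J F} (hM : ReducedMat M)
    {c : J → F} {l : J} {q : I} (hc : c l ≠ 0) (hq : M q l ≠ 0) :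
    ∃ i, q ≤ i ∧ (M *ᵥ c) i ≠ 0 := by
  classical
  let rows := univ.filter fun i => ∃ l, c l ≠ 0 ∧ M i l ≠ 0
  have hq_mem : q ∈ rows := mem_filter.mpr ⟨mem_univ q, l, hc, hq⟩
  let p := rows.max' ⟨q, hq_mem⟩
  obtain ⟨l₁, hc₁, hM₁⟩ := (mem_filter.mp (rows.max'_mem ⟨q, hq_mem⟩)).2
  have hpivot : ∀ l', c l' ≠ 0 → M p l' ≠ 0 → IsPivot (fun i => M i l') p :=
    fun l' hc' hM' => ⟨hM', fun i hi => rows.le_max' i (mem_filter.mpr ⟨mem_univ i, l', hc', hi⟩)⟩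
  refine ⟨p, rows.le_max' q hq_mem, ?_⟩
  have hsum : (M *ᵥ c) p = M p l₁ * c l₁ := by
    refine sum_eq_single l₁ (fun l' _ hl' => ?_) (fun h => absurd (mem_univ l₁) h)
    by_contra hne
    exact hl' (hM l' l₁ p (hpivot l' (right_ne_zero_of_mul hne) (left_ne_zero_of_mul hne))
      (hpivot l₁ hc₁ hM₁))
  rw [hsum]
  exact mul_ne_zero hM₁ hc₁

theorem Matrix.IsUpperTriangular.diag_ne_zero {J F : Type*} [Fintype J] [LinearOrder J]
    [DecidableEq J] [CommRing F] [Nontrivial F] {V : Matrix J J F} (hV : V.IsUpperTriangular)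
    (hunit : IsUnit V) (j : J) : V j j ≠ 0 := by
  have hdet : IsUnit (∏ k, V k k) :=
    det_of_isUpperTriangular hV ▸ (isUnit_iff_isUnit_det V).mp hunit
  exact (IsUnit.prod_iff.mp hdet j (mem_univ j)).ne_zero

/-- Apparent pairs are persistence pairs: if all entries of `D` below or to the
left of the nonzero position `(i₀, j₀)` vanish, then for every regular upper
triangular `V` such that `R = D·V` is reduced, the column `R_{j₀}` is nonzero
with pivot index `i₀`. -/
theorem stmt2 {F I J : Type*} [Field F] [Fintype I] [Fintype J]
    [LinearOrder I] [LinearOrder J] [DecidableEq J]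
    (D : Matrix I J F) (i₀ : I) (j₀ : J)
    (h₁ : D i₀ j₀ ≠ 0)
    (h₂ : ∀ i, i₀ < i → D i j₀ = 0)
    (h₃ : ∀ j, j < j₀ → D i₀ j = 0)
    (V : Matrix J J F) (hV : IsUnit V)
    (hVut : ∀ j₁ j₂ : J, j₂ < j₁ → V j₁ j₂ = 0)
    (hred : ReducedMat (D * V)) :
    (fun r => (D * V) r j₀) ≠ 0 ∧ IsPivot (fun r => (D * V) r j₀) i₀ := by
  have hVtri : V.IsUpperTriangular := fun j₁ j₂ h => hVut j₁ j₂ h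
  have : Invertible V := V.invertibleOfIsUnitDet ((isUnit_iff_isUnit_det V).mp hV)
  have hVinv : V⁻¹ j₀ j₀ ≠ 0 :=
    IsUpperTriangular.diag_ne_zero (blockTriangular_inv_of_blockTriangular hVtri)
      (isUnit_nonsing_inv_iff.mpr hV) j₀
  have hR₀ : (D * V) i₀ j₀ = D i₀ j₀ * V j₀ j₀ := by
    rw [mul_apply]
    refine sum_eq_single j₀ (fun k _ hk => ?_) (fun h => absurd (mem_univ j₀) h)
    rcases hk.lt_or_gt with h | h
    · rw [h₃ k h, zero_mul]
    · rw [hVut k j₀ h, mul_zero]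
  have hR₀_ne : (D * V) i₀ j₀ ≠ 0 := hR₀ ▸ mul_ne_zero h₁ (hVtri.diag_ne_zero hV j₀)
  have hD : ∀ i, ((D * V) *ᵥ fun l => V⁻¹ l j₀) i = D i j₀ := fun i => by
    change (D * V * V⁻¹) i j₀ = D i j₀
    rw [mul_inv_cancel_right_of_invertible]
  refine ⟨fun h => hR₀_ne (congrFun h i₀), hR₀_ne, fun i hi => not_lt.mp fun hlt => ?_⟩
  obtain ⟨i', hii', hne⟩ := hred.exists_le_mulVec_ne_zero (c := fun l => V⁻¹ l j₀) hVinv hi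
  exact hne ((hD i').trans (h₂ i' (hlt.trans_le hii')))
end

section
/- Let K be a finite abstract simplicial complex and ≤ a linear order on K extending the face relation. Then the apparent pairs of ≤ form a discrete vector field on K: in every apparent pair (σ, τ) the simplex σ is a facet of τ, and if (σ, τ) and (σ′, τ′) are apparent pairs with {σ, τ} ∩ {σ′, τ′} ≠ ∅, then σ = σ′ and τ = τ′. -/
/-- `K` is a finite abstract simplicial complex: a finite family of nonempty
finite sets closed under taking nonempty subsets. -/
def IsComplex (K : Finset (Finset ℕ)) : Prop :=
  (∀ σ ∈ K, σ.Nonempty) ∧ (∀ σ ∈ K, ∀ τ : Finset ℕ, τ ⊆ σ → τ.Nonempty → τ ∈ K)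

/-- `σ` is a facet of `τ` (and `τ` a cofacet of `σ`). -/
def IsFacet (σ τ : Finset ℕ) : Prop := σ ⊆ τ ∧ τ.card = σ.card + 1

/-- A linear order on the simplices of `K` extending the face relation,
encoding a simplexwise filtration of `K`. -/
structure SimplexOrder (K : Finset (Finset ℕ)) where
  le : Finset ℕ → Finset ℕ → Prop
  refl : ∀ σ ∈ K, le σ σ
  trans : ∀ σ ∈ K, ∀ τ ∈ K, ∀ ρ ∈ K, le σ τ → le τ ρ → le σ ρ
  antisymm : ∀ σ ∈ K, ∀ τ ∈ K, le σ τ → le τ σ → σ = τ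
  total : ∀ σ ∈ K, ∀ τ ∈ K, le σ τ ∨ le τ σ
  face_le : ∀ σ ∈ K, ∀ τ ∈ K, σ ⊆ τ → le σ τ

/-- `(σ, τ)` is an apparent pair of the simplexwise filtration encoded by `L`:
`σ` is the maximum facet of `τ` in `K`, and `τ` is the minimum cofacet of `σ`
in `K`, with respect to the order `L`. -/
def ApparentPair (K : Finset (Finset ℕ)) (L : SimplexOrder K) (σ τ : Finset ℕ) : Prop :=
  σ ∈ K ∧ τ ∈ K ∧ IsFacet σ τ ∧
  (∀ σ' ∈ K, IsFacet σ' τ → L.le σ' σ) ∧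
  (∀ τ' ∈ K, IsFacet σ τ' → L.le τ τ')

/-!
Two apparent pairs sharing their lower (upper) simplex share the other one too, by the
minimality (maximality) conditions and antisymmetry. The remaining overlaps would give a
chain `σ ⋖ τ ⋖ ρ` of apparent pairs `(σ, τ)`, `(τ, ρ)`; but `ρ` has a second facet `π ≠ τ`
containing `σ`, and then `π ≤ τ` as a facet of `ρ` while `τ ≤ π` as a cofacet of `σ`.
-/

/-- The diamond property of the face poset of a simplex. -/
lemma IsFacet.exists_ne_of_isFacet {σ τ ρ : Finset ℕ} (hστ : IsFacet σ τ) (hτρ : IsFacet τ ρ) :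
    ∃ π, IsFacet σ π ∧ IsFacet π ρ ∧ π ≠ τ := by
  obtain ⟨hστ, hcard_στ⟩ := hστ
  obtain ⟨hτρ, hcard_τρ⟩ := hτρ
  have hssubset : τ ⊂ ρ := hτρ.ssubset_of_ne (by rintro rfl; omega)
  obtain ⟨v, hvρ, hvτ⟩ := Finset.exists_of_ssubset hssubset
  have hvσ : v ∉ σ := fun hv => hvτ (hστ hv)
  have hcard : (insert v σ).card = σ.card + 1 := Finset.card_insert_of_notMem hvσ
  refine ⟨insert v σ, ⟨Finset.subset_insert v σ, hcard⟩,
    ⟨Finset.insert_subset hvρ (hστ.trans hτρ), by omega⟩, ?_⟩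
  rintro rfl
  exact hvτ (Finset.mem_insert_self v σ)

namespace ApparentPair

variable {K : Finset (Finset ℕ)} {L : SimplexOrder K}

lemma snd_eq_of_fst_eq {σ τ τ' : Finset ℕ} (h : ApparentPair K L σ τ)
    (h' : ApparentPair K L σ τ') : τ = τ' := by
  obtain ⟨-, hτ, hστ, -, hmin⟩ := h
  obtain ⟨-, hτ', hστ', -, hmin'⟩ := h'
  exact L.antisymm τ hτ τ' hτ' (hmin τ' hτ' hστ') (hmin' τ hτ hστ)

lemma fst_eq_of_snd_eq {σ σ' τ : Finset ℕ} (h : ApparentPair K L σ τ)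
    (h' : ApparentPair K L σ' τ) : σ = σ' := by
  obtain ⟨hσ, -, hστ, hmax, -⟩ := h
  obtain ⟨hσ', -, hσ'τ, hmax', -⟩ := h'
  exact L.antisymm σ hσ σ' hσ' (hmax' σ hσ hστ) (hmax σ' hσ' hσ'τ)

lemma not_chain (hK : IsComplex K) {σ τ ρ : Finset ℕ} (hστ : ApparentPair K L σ τ)
    (hτρ : ApparentPair K L τ ρ) : False := by
  obtain ⟨-, hτ, hfacet_στ, -, hmin⟩ := hστ
  obtain ⟨-, hρ, hfacet_τρ, hmax, -⟩ := hτρ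
  obtain ⟨π, hσπ, hπρ, hπτ⟩ := hfacet_στ.exists_ne_of_isFacet hfacet_τρ
  have hπ : π ∈ K := hK.2 ρ hρ π hπρ.1 (Finset.card_pos.mp (hσπ.2 ▸ Nat.succ_pos _))
  exact hπτ (L.antisymm π hπ τ hτ (hmax π hπ hπρ) (hmin π hπ hσπ))

end ApparentPair

/-- The apparent pairs of a simplexwise filtration form a discrete vector field:
in every apparent pair `σ` is a facet of `τ`, and no simplex belongs to two
distinct apparent pairs. -/
theorem stmt3 (K : Finset (Finset ℕ)) (hK : IsComplex K) (L : SimplexOrder K) :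
    (∀ σ τ : Finset ℕ, ApparentPair K L σ τ → IsFacet σ τ) ∧
    (∀ σ τ σ' τ' : Finset ℕ, ApparentPair K L σ τ → ApparentPair K L σ' τ' →
      (σ = σ' ∨ σ = τ' ∨ τ = σ' ∨ τ = τ') → σ = σ' ∧ τ = τ') := by
  refine ⟨fun σ τ h => h.2.2.1, ?_⟩
  rintro σ τ σ' τ' h h' (rfl | rfl | rfl | rfl)
  · exact ⟨rfl, h.snd_eq_of_fst_eq h'⟩
  · exact (h'.not_chain hK h).elim
  · exact (h.not_chain hK h').elim
  · exact ⟨h.fst_eq_of_snd_eq h', rfl⟩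
end

section
/- Let K be a finite abstract simplicial complex with simplices enumerated σ_1 < σ_2 < … < σ_m according to a linear order ≤ extending the face relation. Define f : K → ℝ by f(σ_j) = i if (σ_i, σ_j) is an apparent pair of ≤ for some i, and f(σ_j) = j otherwise. Then f is a discrete Morse function, and its gradient pairs (the facet pairs (σ, τ) with f(σ) = f(τ)) are exactly the apparent pairs of ≤. -/
/-- Given an enumeration `e : Fin m → Finset ℕ` of the simplices in filtration
order, `(i, j)` indexes an apparent pair if `e i` is the facet of `e j` with
maximal index and `e j` is the cofacet of `e i` with minimal index. -/
def ApparentIdx (m : ℕ) (e : Fin m → Finset ℕ) (i j : Fin m) : Prop :=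
  IsFacet (e i) (e j) ∧ (∀ i', IsFacet (e i') (e j) → i' ≤ i) ∧
  (∀ j', IsFacet (e i) (e j') → j ≤ j')

open Classical in
/-- The function `f` with `f(σ_j) = i` if `(σ_i, σ_j)` is an apparent pair, and
`f(σ_j) = j` otherwise. -/
noncomputable def apparentMorse (m : ℕ) (e : Fin m → Finset ℕ) (j : Fin m) : ℝ :=
  if h : ∃ i, ApparentIdx m e i j then ((h.choose : ℕ) : ℝ) else ((j : ℕ) : ℝ)

/-!
Two apparent pairs never form a chain `(σ_i, σ_j)`, `(σ_j, σ_k)`: by the diamond property `σ_k`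
has a second facet `ρ ≠ σ_j` containing `σ_i`, and `ρ` would have index `≤ j` as a facet of `σ_k`
and `≥ j` as a cofacet of `σ_i`. Hence `f(σ_j) ≤ j`, with equality unless `σ_j` is the upper
simplex of an apparent pair. Monotonicity: a proper face of `σ_j` lies in a facet of `σ_j`, whose
index is at most that of the apparent partner of `σ_j`. Conversely, if `f(σ_i) = f(σ_j)` for a facet
`σ_i` of `σ_j`, then `σ_j` is paired (otherwise `f(σ_j) = j > i ≥ f(σ_i)`), and `f(σ_i)` is either
`i`, giving the apparent pair, or the index of a facet of `σ_i`, which cannot be a facet of `σ_j`.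
-/

namespace IsComplex

variable {K : Finset (Finset ℕ)} {σ ρ τ : Finset ℕ}

theorem exists_isFacet_of_ssubset (hK : IsComplex K) (hτ : τ ∈ K) (hστ : σ ⊂ τ)
    (hσ : σ.Nonempty) : ∃ ρ ∈ K, σ ⊆ ρ ∧ IsFacet ρ τ := by
  obtain ⟨v, hvτ, hvσ⟩ := Finset.exists_of_ssubset hστ
  have hσρ : σ ⊆ τ.erase v := fun x hx =>
    Finset.mem_erase.2 ⟨ne_of_mem_of_not_mem hx hvσ, hστ.subset hx⟩
  refine ⟨τ.erase v, hK.2 τ hτ _ (τ.erase_subset v) (hσ.mono hσρ), hσρ, τ.erase_subset v, ?_⟩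
  rw [Finset.card_erase_of_mem hvτ]
  have := Finset.card_pos.2 ⟨v, hvτ⟩
  omega

theorem exists_isFacet_ne (hK : IsComplex K) (hτ : τ ∈ K) (hσρ : IsFacet σ ρ)
    (hρτ : IsFacet ρ τ) : ∃ ρ' ∈ K, IsFacet σ ρ' ∧ IsFacet ρ' τ ∧ ρ' ≠ ρ := by
  obtain ⟨w, hwτ, hwρ⟩ :=
    Finset.exists_of_ssubset (hρτ.1.ssubset_of_ne (by rintro rfl; have := hρτ.2; omega))
  have hwσ : w ∉ σ := fun h => hwρ (hσρ.1 h)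
  have hcard := Finset.card_insert_of_notMem hwσ
  have hsub : insert w σ ⊆ τ := Finset.insert_subset hwτ (hσρ.1.trans hρτ.1)
  refine ⟨insert w σ, hK.2 τ hτ _ hsub (Finset.insert_nonempty w σ),
    ⟨Finset.subset_insert w σ, hcard⟩, ⟨hsub, by rw [hcard, hρτ.2, hσρ.2]⟩, ?_⟩
  rintro rfl
  exact hwρ (Finset.mem_insert_self w σ)

end IsComplex

section Apparent

variable {K : Finset (Finset ℕ)} {m : ℕ} {e : Fin m → Finset ℕ} {i j k : Fin m}

theorem lt_of_isFacet (hface : ∀ i j : Fin m, e i ⊆ e j → i ≤ j)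
    (h : IsFacet (e i) (e j)) : i < j :=
  lt_of_le_of_ne (hface i j h.1) (by rintro rfl; have := h.2; omega)

theorem apparentMorse_of_not_exists (h : ¬ ∃ i, ApparentIdx m e i j) :
    apparentMorse m e j = (j : ℕ) := by
  rw [apparentMorse, dif_neg h]

namespace ApparentIdx

theorem left_unique {i' : Fin m} (h : ApparentIdx m e i j) (h' : ApparentIdx m e i' j) :
    i = i' :=
  le_antisymm (h'.2.1 i h.1) (h.2.1 i' h'.1)

theorem right_unique {j' : Fin m} (h : ApparentIdx m e i j) (h' : ApparentIdx m e i j') :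
    j = j' :=
  le_antisymm (h.2.2 j' h'.1) (h'.2.2 j h.1)

theorem not_apparentIdx (hK : IsComplex K) (hsurj : ∀ σ : Finset ℕ, σ ∈ K ↔ ∃ i, e i = σ)
    (hij : ApparentIdx m e i j) : ¬ ApparentIdx m e j k := by
  intro hjk
  obtain ⟨ρ, hρK, hiρ, hρk, hρj⟩ := hK.exists_isFacet_ne ((hsurj _).2 ⟨k, rfl⟩) hij.1 hjk.1
  obtain ⟨l, rfl⟩ := (hsurj ρ).1 hρK
  exact hρj (congrArg e (le_antisymm (hjk.2.1 l hρk) (hij.2.2 l hiρ)))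

theorem apparentMorse_right (h : ApparentIdx m e i j) : apparentMorse m e j = (i : ℕ) := by
  have hex : ∃ i, ApparentIdx m e i j := ⟨i, h⟩
  rw [apparentMorse, dif_pos hex, hex.choose_spec.left_unique h]

theorem apparentMorse_left (hK : IsComplex K)
    (hsurj : ∀ σ : Finset ℕ, σ ∈ K ↔ ∃ i, e i = σ) (h : ApparentIdx m e i j) :
    apparentMorse m e i = (i : ℕ) :=
  apparentMorse_of_not_exists fun ⟨_, hk⟩ => hk.not_apparentIdx hK hsurj h

end ApparentIdx

theorem apparentMorse_le_self (hface : ∀ i j : Fin m, e i ⊆ e j → i ≤ j) (j : Fin m) :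
    apparentMorse m e j ≤ (j : ℕ) := by
  by_cases h : ∃ i, ApparentIdx m e i j
  · obtain ⟨i, hi⟩ := h
    rw [hi.apparentMorse_right]
    exact_mod_cast (lt_of_isFacet hface hi.1).le
  · rw [apparentMorse_of_not_exists h]

theorem apparentMorse_mono (hK : IsComplex K) (hsurj : ∀ σ : Finset ℕ, σ ∈ K ↔ ∃ i, e i = σ)
    (hface : ∀ i j : Fin m, e i ⊆ e j → i ≤ j) (hsub : e i ⊆ e j) :
    apparentMorse m e i ≤ apparentMorse m e j := by
  rcases hsub.eq_or_ssubset with heq | hss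
  · rw [le_antisymm (hface _ _ hsub) (hface _ _ heq.ge)]
  refine (apparentMorse_le_self hface i).trans ?_
  by_cases hj : ∃ k, ApparentIdx m e k j
  · obtain ⟨k, hk⟩ := hj
    obtain ⟨ρ, hρK, hiρ, hρj⟩ := hK.exists_isFacet_of_ssubset ((hsurj _).2 ⟨j, rfl⟩) hss
      (hK.1 _ ((hsurj _).2 ⟨i, rfl⟩))
    obtain ⟨l, rfl⟩ := (hsurj ρ).1 hρK
    rw [hk.apparentMorse_right]
    exact_mod_cast (hface _ _ hiρ).trans (hk.2.1 l hρj)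
  · rw [apparentMorse_of_not_exists hj]
    exact_mod_cast hface _ _ hsub

theorem isFacet_and_apparentMorse_eq_iff (hK : IsComplex K)
    (hsurj : ∀ σ : Finset ℕ, σ ∈ K ↔ ∃ i, e i = σ) (hface : ∀ i j : Fin m, e i ⊆ e j → i ≤ j) :
    IsFacet (e i) (e j) ∧ apparentMorse m e i = apparentMorse m e j ↔ ApparentIdx m e i j := by
  refine ⟨fun ⟨hf, heq⟩ => ?_, fun h =>
    ⟨h.1, by rw [h.apparentMorse_left hK hsurj, h.apparentMorse_right]⟩⟩
  obtain ⟨k, hk⟩ : ∃ k, ApparentIdx m e k j := by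
    by_contra hj
    rw [apparentMorse_of_not_exists hj] at heq
    have hij : ((i : ℕ) : ℝ) < (j : ℕ) := by exact_mod_cast lt_of_isFacet hface hf
    linarith [apparentMorse_le_self hface i]
  rw [hk.apparentMorse_right] at heq
  by_cases hi : ∃ l, ApparentIdx m e l i
  · obtain ⟨l, hl⟩ := hi
    rw [hl.apparentMorse_right] at heq
    obtain rfl : l = k := Fin.ext (by exact_mod_cast heq)
    linarith [hl.1.2, hk.1.2, hf.2]
  · rw [apparentMorse_of_not_exists hi] at heq
    obtain rfl : i = k := Fin.ext (by exact_mod_cast heq)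
    exact hk

end Apparent

theorem stmt4_general (K : Finset (Finset ℕ)) (hK : IsComplex K)
    (m : ℕ) (e : Fin m → Finset ℕ)
    (hsurj : ∀ σ : Finset ℕ, σ ∈ K ↔ ∃ i, e i = σ)
    (hface : ∀ i j : Fin m, e i ⊆ e j → i ≤ j) :
    (∀ i j : Fin m, e i ⊆ e j → apparentMorse m e i ≤ apparentMorse m e j) ∧
    (∀ i j i' j' : Fin m,
      IsFacet (e i) (e j) → apparentMorse m e i = apparentMorse m e j →
      IsFacet (e i') (e j') → apparentMorse m e i' = apparentMorse m e j' →
      (i = i' ∨ i = j' ∨ j = i' ∨ j = j') → i = i' ∧ j = j') ∧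
    (∀ i j : Fin m,
      (IsFacet (e i) (e j) ∧ apparentMorse m e i = apparentMorse m e j) ↔
      ApparentIdx m e i j) := by
  have hiff (i j : Fin m) := isFacet_and_apparentMorse_eq_iff (i := i) (j := j) hK hsurj hface
  refine ⟨fun i j => apparentMorse_mono hK hsurj hface, ?_, hiff⟩
  intro i j i' j' hf heq hf' heq' hshare
  have h := (hiff i j).1 ⟨hf, heq⟩
  have h' := (hiff i' j').1 ⟨hf', heq'⟩
  rcases hshare with rfl | rfl | rfl | rfl
  · exact ⟨rfl, h.right_unique h'⟩
  · exact (h'.not_apparentIdx hK hsurj h).elim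
  · exact (h.not_apparentIdx hK hsurj h').elim
  · exact ⟨h.left_unique h', rfl⟩

/-- For a simplicial complex `K` with simplices enumerated `σ_1 < … < σ_m` in a
linear order extending the face relation, the function `f` with `f(σ_j) = i` if
`(σ_i, σ_j)` is an apparent pair and `f(σ_j) = j` otherwise is a discrete Morse
function whose gradient pairs are exactly the apparent pairs. -/
theorem stmt4 (K : Finset (Finset ℕ)) (hK : IsComplex K)
    (m : ℕ) (e : Fin m → Finset ℕ)
    (hinj : Function.Injective e)
    (hsurj : ∀ σ : Finset ℕ, σ ∈ K ↔ ∃ i, e i = σ)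
    (hface : ∀ i j : Fin m, e i ⊆ e j → i ≤ j) :
    (∀ i j : Fin m, e i ⊆ e j → apparentMorse m e i ≤ apparentMorse m e j) ∧
    (∀ i j i' j' : Fin m,
      IsFacet (e i) (e j) → apparentMorse m e i = apparentMorse m e j →
      IsFacet (e i') (e j') → apparentMorse m e i' = apparentMorse m e j' →
      (i = i' ∨ i = j' ∨ j = i' ∨ j = j') → i = i' ∧ j = j') ∧
    (∀ i j : Fin m,
      (IsFacet (e i) (e j) ∧ apparentMorse m e i = apparentMorse m e j) ↔
      ApparentIdx m e i j) :=
  stmt4_general K hK m e hsurj hface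
end

section
/- Let K be a finite abstract simplicial complex, f : K → ℝ a discrete Morse function, and ≤ a linear order on K extending the face relation such that f(σ) < f(τ) implies σ < τ (a simplexwise refinement of the sublevel set filtration of f). Then a pair (σ, τ) is a gradient pair of f if and only if (σ, τ) is an apparent pair of ≤ with f(σ) = f(τ). -/
theorem SimplexOrder.le_of_le_of_eq_imp_eq {K : Finset (Finset ℕ)} {f : Finset ℕ → ℝ}
    (L : SimplexOrder K) (hrefine : ∀ σ ∈ K, ∀ τ ∈ K, f σ < f τ → L.le σ τ ∧ σ ≠ τ)
    {ρ π : Finset ℕ} (hρ : ρ ∈ K) (hπ : π ∈ K) (hle : f ρ ≤ f π) (heq : f ρ = f π → ρ = π) :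
    L.le ρ π := by
  rcases hle.lt_or_eq with hlt | hfeq
  · exact (hrefine ρ hρ π hπ hlt).1
  · obtain rfl := heq hfeq
    exact L.refl ρ hρ

theorem stmt5_general (K : Finset (Finset ℕ))
    (f : Finset ℕ → ℝ)
    (hmono : ∀ σ ∈ K, ∀ τ ∈ K, σ ⊆ τ → f σ ≤ f τ)
    (hvf : ∀ σ τ σ' τ' : Finset ℕ, σ ∈ K → τ ∈ K → σ' ∈ K → τ' ∈ K →
      IsFacet σ τ → f σ = f τ → IsFacet σ' τ' → f σ' = f τ' →
      (σ = σ' ∨ σ = τ' ∨ τ = σ' ∨ τ = τ') → σ = σ' ∧ τ = τ')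
    (L : SimplexOrder K)
    (hrefine : ∀ σ ∈ K, ∀ τ ∈ K, f σ < f τ → L.le σ τ ∧ σ ≠ τ) :
    ∀ σ ∈ K, ∀ τ ∈ K,
      (IsFacet σ τ ∧ f σ = f τ) ↔ (ApparentPair K L σ τ ∧ f σ = f τ) := by
  intro σ hσ τ hτ
  refine ⟨fun ⟨hστ, hf⟩ => ⟨⟨hσ, hτ, hστ, ?_, ?_⟩, hf⟩, fun ⟨hap, hf⟩ => ⟨hap.2.2.1, hf⟩⟩
  -- Other facets of `τ` lie strictly below, and other cofacets of `σ` strictly above, the value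
  -- of the pair: a second gradient pair sharing `σ` or `τ` with `(σ, τ)` would coincide with it.
  · intro σ' hσ' hσ'τ
    refine L.le_of_le_of_eq_imp_eq hrefine hσ' hσ (hf ▸ hmono σ' hσ' τ hτ hσ'τ.1) fun h => ?_
    exact (hvf σ τ σ' τ hσ hτ hσ' hτ hστ hf hσ'τ (h.trans hf) (by simp)).1.symm
  · intro τ' hτ' hστ'
    refine L.le_of_le_of_eq_imp_eq hrefine hτ hτ' (hf ▸ hmono σ hσ τ' hτ' hστ'.1) fun h => ?_
    exact (hvf σ τ σ τ' hσ hτ hσ hτ' hστ hf hστ' (hf.trans h) (by simp)).2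

/-- If `f` is a discrete Morse function on `K` and `L` is a simplexwise
refinement of the sublevel set filtration of `f`, then the gradient pairs of
`f` are precisely the apparent pairs `(σ, τ)` of `L` with `f(σ) = f(τ)`. -/
theorem stmt5 (K : Finset (Finset ℕ)) (hK : IsComplex K)
    (f : Finset ℕ → ℝ)
    (hmono : ∀ σ ∈ K, ∀ τ ∈ K, σ ⊆ τ → f σ ≤ f τ)
    (hvf : ∀ σ τ σ' τ' : Finset ℕ, σ ∈ K → τ ∈ K → σ' ∈ K → τ' ∈ K →
      IsFacet σ τ → f σ = f τ → IsFacet σ' τ' → f σ' = f τ' →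
      (σ = σ' ∨ σ = τ' ∨ τ = σ' ∨ τ = τ') → σ = σ' ∧ τ = τ')
    (L : SimplexOrder K)
    (hrefine : ∀ σ ∈ K, ∀ τ ∈ K, f σ < f τ → L.le σ τ ∧ σ ≠ τ) :
    ∀ σ ∈ K, ∀ τ ∈ K,
      (IsFacet σ τ ∧ f σ = f τ) ↔ (ApparentPair K L σ τ ∧ f σ = f τ) :=
  stmt5_general K f hmono hvf L hrefine
end

section
/- Let K be a finite abstract simplicial complex with vertices in ℕ, and let ≤ be the lexicographic order on K: σ < τ if |σ| < |τ|, or |σ| = |τ| and σ precedes τ colexicographically. Then (σ, τ) is an apparent pair of ≤ if and only if τ = σ ∪ {v} ∈ K, where v < min σ and v is the least natural number w ∉ σ with σ ∪ {w} ∈ K. -/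
/-- The lexicographic order on simplices: first by dimension (cardinality),
then colexicographically by vertices. -/
def lexLe (σ τ : Finset ℕ) : Prop :=
  σ.card < τ.card ∨ (σ.card = τ.card ∧ toColex σ ≤ toColex τ)

/-- `(σ, τ)` is an apparent pair of the order `le`: `σ` is the maximum facet of
`τ` in `K` and `τ` is the minimum cofacet of `σ` in `K`, with respect to `le`. -/
def ApparentPairLe (K : Finset (Finset ℕ)) (le : Finset ℕ → Finset ℕ → Prop)
    (σ τ : Finset ℕ) : Prop :=
  σ ∈ K ∧ τ ∈ K ∧ IsFacet σ τ ∧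
  (∀ σ' ∈ K, IsFacet σ' τ → le σ' σ) ∧
  (∀ τ' ∈ K, IsFacet σ τ' → le τ τ')

/-!
All facets of `τ` and all cofacets of `σ` have the same cardinality, so on them the lexicographic
order is colexicographic. The facets of `τ` are the sets `τ.erase x`, and
`τ.erase x ≤ τ.erase v` colexicographically iff `v ≤ x`; since `K` is closed under nonempty
subsets, all of them lie in `K`, so `τ.erase v` is the maximal facet iff `v = min τ`. The cofacets
of `σ` are the sets `insert w σ`, ordered like `w`, so `insert v σ` is the minimal cofacet in `K`
iff `v` is the least admissible vertex.
-/

open Finset Finset.Colex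

lemma isFacet_iff_exists_insert {σ τ : Finset ℕ} : IsFacet σ τ ↔ ∃ x ∉ σ, insert x σ = τ := by
  rw [exists_eq_insert_iff, IsFacet, eq_comm]

lemma isFacet_iff_exists_erase {σ τ : Finset ℕ} : IsFacet σ τ ↔ ∃ x ∈ τ, τ.erase x = σ := by
  rw [isFacet_iff_exists_insert]
  constructor
  · rintro ⟨x, hx, rfl⟩
    exact ⟨x, mem_insert_self x σ, erase_insert hx⟩
  · rintro ⟨x, hx, rfl⟩
    exact ⟨x, notMem_erase x τ, insert_erase hx⟩

lemma lexLe_iff_of_card_eq {σ τ : Finset ℕ} (h : σ.card = τ.card) :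
    lexLe σ τ ↔ toColex σ ≤ toColex τ := by
  simp [lexLe, h]

lemma lexLe_erase_erase_iff {τ : Finset ℕ} {x v : ℕ} (hx : x ∈ τ) (hv : v ∈ τ) :
    lexLe (τ.erase x) (τ.erase v) ↔ v ≤ x := by
  rw [lexLe_iff_of_card_eq (by rw [card_erase_of_mem hx, card_erase_of_mem hv]),
    erase_le_erase hx hv]

lemma lexLe_insert_insert_iff {σ : Finset ℕ} {v w : ℕ} (hv : v ∉ σ) (hw : w ∉ σ) :
    lexLe (insert v σ) (insert w σ) ↔ v ≤ w := by
  rw [lexLe_iff_of_card_eq (by rw [card_insert_of_notMem hv, card_insert_of_notMem hw]),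
    insert_le_insert hv hw]

lemma forall_cofacet_lexLe_iff (K : Finset (Finset ℕ)) {σ : Finset ℕ} {v : ℕ} (hv : v ∉ σ) :
    (∀ τ' ∈ K, IsFacet σ τ' → lexLe (insert v σ) τ') ↔
      ∀ w : ℕ, w ∉ σ → insert w σ ∈ K → v ≤ w := by
  constructor
  · intro h w hw hwK
    exact (lexLe_insert_insert_iff hv hw).1 (h _ hwK (isFacet_iff_exists_insert.2 ⟨w, hw, rfl⟩))
  · rintro h _ hτ' hf
    obtain ⟨w, hw, rfl⟩ := isFacet_iff_exists_insert.1 hf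
    exact (lexLe_insert_insert_iff hv hw).2 (h w hw hτ')

lemma forall_facet_lexLe_erase_iff {K : Finset (Finset ℕ)} (hK : IsComplex K) {τ : Finset ℕ}
    (hτ : τ ∈ K) {v : ℕ} (hv : v ∈ τ) :
    (∀ σ' ∈ K, IsFacet σ' τ → lexLe σ' (τ.erase v)) ↔ ∀ x ∈ τ, v ≤ x := by
  constructor
  · intro h x hx
    obtain rfl | hxv := eq_or_ne x v
    · exact le_rfl
    have hxK : τ.erase x ∈ K :=
      hK.2 τ hτ _ (erase_subset x τ) ⟨v, mem_erase.2 ⟨hxv.symm, hv⟩⟩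
    exact (lexLe_erase_erase_iff hx hv).1 (h _ hxK (isFacet_iff_exists_erase.2 ⟨x, hx, rfl⟩))
  · rintro h _ - hf
    obtain ⟨x, hx, rfl⟩ := isFacet_iff_exists_erase.1 hf
    exact (lexLe_erase_erase_iff hx hv).2 (h x hx)

lemma forall_facet_lexLe_iff {K : Finset (Finset ℕ)} (hK : IsComplex K) {σ : Finset ℕ} {v : ℕ}
    (hv : v ∉ σ) (hτ : insert v σ ∈ K) :
    (∀ σ' ∈ K, IsFacet σ' (insert v σ) → lexLe σ' σ) ↔ ∀ w ∈ σ, v < w := by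
  have h := forall_facet_lexLe_erase_iff hK hτ (mem_insert_self v σ)
  rw [erase_insert hv, forall_mem_insert] at h
  rw [h]
  simp only [le_refl, true_and]
  exact forall₂_congr fun w hw => (ne_of_mem_of_not_mem hw hv).symm.le_iff_lt

/-- For the lexicographic order on a simplicial complex `K`, `(σ, τ)` is an
apparent pair if and only if `τ = σ ∪ {v} ∈ K`, where `v < min σ` and `v` is
the least vertex `w ∉ σ` with `σ ∪ {w} ∈ K`. -/
theorem stmt6 (K : Finset (Finset ℕ)) (hK : IsComplex K)
    (σ τ : Finset ℕ) (hσ : σ ∈ K) :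
    ApparentPairLe K lexLe σ τ ↔
      ∃ v : ℕ, v ∉ σ ∧ τ = insert v σ ∧ insert v σ ∈ K ∧
        (∀ w ∈ σ, v < w) ∧
        (∀ w : ℕ, w ∉ σ → insert w σ ∈ K → v ≤ w) := by
  constructor
  · rintro ⟨-, hτ, hfacet, hmax, hmin⟩
    obtain ⟨v, hv, rfl⟩ := isFacet_iff_exists_insert.1 hfacet
    exact ⟨v, hv, rfl, hτ, (forall_facet_lexLe_iff hK hv hτ).1 hmax,
      (forall_cofacet_lexLe_iff K hv).1 hmin⟩
  · rintro ⟨v, hv, rfl, hτ, hlt, hleast⟩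
    exact ⟨hσ, hτ, isFacet_iff_exists_insert.2 ⟨v, hv, rfl⟩,
      (forall_facet_lexLe_iff hK hv hτ).2 hlt, (forall_cofacet_lexLe_iff K hv).2 hleast⟩
end

section
/- Let K be a finite abstract simplicial complex with vertices in ℕ. The lexicographic gradient of K is the set of pairs (σ, σ ∪ {v}) where σ ∈ K, σ ∪ {v} ∈ K, v < min σ, and v is the least natural number w ∉ σ with σ ∪ {w} ∈ K. Then there exists a discrete Morse function on K whose gradient pairs are exactly the lexicographic gradient pairs; in particular, the lexicographic gradient is a discrete vector field on K. -/
/-- `(σ, τ)` is a lexicographic gradient pair of `K`: `τ = σ ∪ {v} ∈ K`, where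
`v < min σ` and `v` is the least vertex `w ∉ σ` with `σ ∪ {w} ∈ K`. -/
def LexGrad (K : Finset (Finset ℕ)) (σ τ : Finset ℕ) : Prop :=
  σ ∈ K ∧ ∃ v : ℕ, v ∉ σ ∧ τ = insert v σ ∧ τ ∈ K ∧
    (∀ w ∈ σ, v < w) ∧ (∀ w : ℕ, w ∉ σ → insert w σ ∈ K → v ≤ w)

variable {K : Finset (Finset ℕ)} {σ τ : Finset ℕ}

theorem IsFacet.exists_insert_eq (h : IsFacet σ τ) : ∃ x ∉ σ, insert x σ = τ := by
  obtain ⟨x, hxτ, hxσ⟩ := Finset.exists_of_ssubset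
    (Finset.ssubset_iff_subset_ne.2 ⟨h.1, fun he => by simpa [he] using h.2⟩)
  refine ⟨x, hxσ, Finset.eq_of_subset_of_card_le (Finset.insert_subset hxτ h.1) ?_⟩
  rw [Finset.card_insert_of_notMem hxσ, h.2]

theorem isFacet_insert {x : ℕ} (hx : x ∉ σ) : IsFacet σ (insert x σ) :=
  ⟨Finset.subset_insert x σ, Finset.card_insert_of_notMem hx⟩

theorem IsComplex.le_of_subset {f : Finset ℕ → ℝ} (hK : IsComplex K)
    (hf : ∀ σ ∈ K, ∀ τ ∈ K, IsFacet σ τ → f σ ≤ f τ) (hσ : σ ∈ K) (hτ : τ ∈ K)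
    (hστ : σ ⊆ τ) : f σ ≤ f τ := by
  suffices ∀ s : Finset ℕ, ∀ σ ∈ K, σ ∪ s ∈ K → f σ ≤ f (σ ∪ s) by
    simpa [Finset.union_sdiff_of_subset hστ, hτ] using this (τ \ σ) σ hσ
  intro s
  induction s using Finset.induction_on with
  | empty => simp
  | insert a s _ ih =>
    intro σ hσ hσs
    rw [Finset.union_insert, ← Finset.insert_union] at hσs ⊢
    by_cases ha : a ∈ σ
    · rw [Finset.insert_eq_of_mem ha] at hσs ⊢
      exact ih σ hσ hσs
    have haσ : insert a σ ∈ K :=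
      hK.2 _ hσs _ Finset.subset_union_left (by simp)
    exact (hf σ hσ _ haσ (isFacet_insert ha)).trans (ih _ haσ hσs)

namespace LexGrad

theorem isFacet (h : LexGrad K σ τ) : IsFacet σ τ := by
  obtain ⟨-, v, hv, rfl, -⟩ := h
  exact isFacet_insert hv

theorem right_unique {τ' : Finset ℕ} (h : LexGrad K σ τ) (h' : LexGrad K σ τ') : τ = τ' := by
  obtain ⟨-, v, hv, rfl, hτ, -, hmin⟩ := h
  obtain ⟨-, v', hv', rfl, hτ', -, hmin'⟩ := h'
  rw [le_antisymm (hmin v' hv' hτ') (hmin' v hv hτ)]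

theorem left_unique {σ' : Finset ℕ} (h : LexGrad K σ τ) (h' : LexGrad K σ' τ) : σ = σ' := by
  obtain ⟨-, v, hv, rfl, -, hlt, -⟩ := h
  obtain ⟨-, v', hv', he, -, hlt', -⟩ := h'
  -- both `v` and `v'` are the least vertex of `τ`
  have hvv' : v = v' := by
    have h₁ : v ∈ insert v' σ' := he ▸ Finset.mem_insert_self v σ
    have h₂ : v' ∈ insert v σ := he ▸ Finset.mem_insert_self v' σ'
    rw [Finset.mem_insert] at h₁ h₂
    rcases h₁ with h₁ | h₁
    · exact h₁
    rcases h₂ with h₂ | h₂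
    · exact h₂.symm
    exact absurd (hlt _ h₂) (hlt' _ h₁).not_gt
  subst hvv'
  simpa [Finset.erase_insert hv, Finset.erase_insert hv'] using congrArg (·.erase v) he

/-- The upper end of a lexicographic pair is never the lower end of one: if `τ = σ ∪ {v}` and
`σ = ρ ∪ {u}`, then `ρ ∪ {v}` is a face of `τ` with `v < u`, contradicting the minimality of `u`. -/
theorem not_lexGrad (hK : IsComplex K) {ρ : Finset ℕ} (hρ : LexGrad K ρ σ) :
    ¬LexGrad K σ τ := by
  rintro ⟨-, v, hvσ, rfl, hτ, hlt, -⟩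
  obtain ⟨-, u, -, rfl, -, -, hmin⟩ := hρ
  have hvρ : v ∉ ρ := fun hv => hvσ (Finset.mem_insert_of_mem hv)
  have hvρK : insert v ρ ∈ K :=
    hK.2 _ hτ _ (Finset.insert_subset_insert v (Finset.subset_insert u ρ)) (by simp)
  exact (hmin v hvρ hvρK).not_gt (hlt u (Finset.mem_insert_self u ρ))

end LexGrad

open Classical in
noncomputable def lexUpper (K : Finset (Finset ℕ)) (σ : Finset ℕ) : Finset ℕ :=
  if h : ∃ τ, LexGrad K σ τ then h.choose else σ

theorem lexUpper_eq_of_lexGrad (h : LexGrad K σ τ) : lexUpper K σ = τ := by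
  have he : ∃ τ, LexGrad K σ τ := ⟨τ, h⟩
  rw [lexUpper, dif_pos he]
  exact he.choose_spec.right_unique h

theorem lexUpper_eq_self (h : ¬∃ τ, LexGrad K σ τ) : lexUpper K σ = σ := by
  rw [lexUpper, dif_neg h]

theorem subset_lexUpper (σ : Finset ℕ) : σ ⊆ lexUpper K σ := by
  by_cases h : ∃ τ, LexGrad K σ τ
  · obtain ⟨τ, hτ⟩ := h
    exact lexUpper_eq_of_lexGrad hτ ▸ hτ.isFacet.1
  · exact (lexUpper_eq_self h).ge

def vertexWeight (ρ : Finset ℕ) : ℝ := ∑ w ∈ ρ, ((w : ℝ) + 1)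

theorem vertexWeight_insert {x : ℕ} (hx : x ∉ σ) :
    vertexWeight (insert x σ) = x + 1 + vertexWeight σ :=
  Finset.sum_insert hx

theorem vertexWeight_mono (h : σ ⊆ τ) : vertexWeight σ ≤ vertexWeight τ :=
  Finset.sum_le_sum_of_subset_of_nonneg h fun _ _ _ => by positivity

theorem vertexWeight_lt_of_ssubset (h : σ ⊂ τ) : vertexWeight σ < vertexWeight τ := by
  obtain ⟨x, hxτ, hxσ⟩ := Finset.exists_of_ssubset h
  exact Finset.sum_lt_sum_of_subset h.1 hxτ hxσ (by positivity) fun _ _ _ => by positivity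

noncomputable def lexMorse (K : Finset (Finset ℕ)) (σ : Finset ℕ) : ℝ :=
  vertexWeight (lexUpper K σ)

theorem vertexWeight_le_lexMorse (σ : Finset ℕ) : vertexWeight σ ≤ lexMorse K σ :=
  vertexWeight_mono (subset_lexUpper σ)

theorem lexMorse_eq_of_lexGrad (hK : IsComplex K) (h : LexGrad K σ τ) :
    lexMorse K σ = lexMorse K τ := by
  have hτ : ¬∃ π, LexGrad K τ π := fun ⟨_, hπ⟩ => LexGrad.not_lexGrad hK h hπ
  rw [lexMorse, lexMorse, lexUpper_eq_of_lexGrad h, lexUpper_eq_self hτ]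

theorem lexGrad_or_lexMorse_lt (hτ : τ ∈ K) (hστ : IsFacet σ τ) :
    LexGrad K σ τ ∨ lexMorse K σ < lexMorse K τ := by
  refine or_iff_not_imp_left.2 fun hne => lt_of_lt_of_le ?_ (vertexWeight_le_lexMorse τ)
  obtain ⟨x, hxσ, rfl⟩ := hστ.exists_insert_eq
  by_cases hσ : ∃ π, LexGrad K σ π
  · obtain ⟨π, hπ⟩ := hσ
    rw [lexMorse, lexUpper_eq_of_lexGrad hπ]
    obtain ⟨-, v, hvσ, rfl, -, -, hmin⟩ := id hπ
    have hvx : v < x := (hmin x hxσ hτ).lt_of_ne fun h => hne (h ▸ hπ)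
    rw [vertexWeight_insert hvσ, vertexWeight_insert hxσ]
    have : (v : ℝ) < x := by exact_mod_cast hvx
    linarith
  · rw [lexMorse, lexUpper_eq_self hσ]
    exact vertexWeight_lt_of_ssubset (Finset.ssubset_insert hxσ)

theorem lexMorse_le_of_isFacet (hK : IsComplex K) (hτ : τ ∈ K) (hστ : IsFacet σ τ) :
    lexMorse K σ ≤ lexMorse K τ :=
  (lexGrad_or_lexMorse_lt hτ hστ).elim (fun h => (lexMorse_eq_of_lexGrad hK h).le) le_of_lt

theorem lexMorse_mono (hK : IsComplex K) (hσ : σ ∈ K) (hτ : τ ∈ K) (hστ : σ ⊆ τ) :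
    lexMorse K σ ≤ lexMorse K τ :=
  hK.le_of_subset (fun _ _ _ hτ => lexMorse_le_of_isFacet hK hτ) hσ hτ hστ

theorem isFacet_and_lexMorse_eq_iff (hK : IsComplex K) (hτ : τ ∈ K) :
    (IsFacet σ τ ∧ lexMorse K σ = lexMorse K τ) ↔ LexGrad K σ τ :=
  ⟨fun ⟨hστ, he⟩ => (lexGrad_or_lexMorse_lt hτ hστ).resolve_right he.not_lt,
    fun h => ⟨h.isFacet, lexMorse_eq_of_lexGrad hK h⟩⟩

/-- There is a discrete Morse function on `K` whose gradient pairs are exactly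
the lexicographic gradient pairs; in particular, the lexicographic gradient is
a discrete vector field on `K`. -/
theorem stmt7 (K : Finset (Finset ℕ)) (hK : IsComplex K) :
    (∃ f : Finset ℕ → ℝ,
      (∀ σ ∈ K, ∀ τ ∈ K, σ ⊆ τ → f σ ≤ f τ) ∧
      (∀ σ τ : Finset ℕ, σ ∈ K → τ ∈ K →
        ((IsFacet σ τ ∧ f σ = f τ) ↔ LexGrad K σ τ))) ∧
    (∀ σ τ : Finset ℕ, LexGrad K σ τ → IsFacet σ τ) ∧
    (∀ σ τ σ' τ' : Finset ℕ, LexGrad K σ τ → LexGrad K σ' τ' →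
      (σ = σ' ∨ σ = τ' ∨ τ = σ' ∨ τ = τ') → σ = σ' ∧ τ = τ') := by
  refine ⟨⟨lexMorse K, fun σ hσ τ hτ => lexMorse_mono hK hσ hτ,
    fun σ τ _ hτ => isFacet_and_lexMorse_eq_iff hK hτ⟩, fun _ _ h => h.isFacet, ?_⟩
  rintro σ τ σ' τ' h h' (rfl | rfl | rfl | rfl)
  · exact ⟨rfl, h.right_unique h'⟩
  · exact (h'.not_lexGrad hK h).elim
  · exact (h.not_lexGrad hK h').elim
  · exact ⟨h.left_unique h', rfl⟩
end

section
/- Let X be a finite metric space with a linear order on its points, and let ≤ be the lexicographically refined Vietoris–Rips order on the nonempty subsets of X. Let σ ⊆ X be nonempty and τ a cofacet of σ (τ ⊇ σ with |τ| = |σ| + 1). Then (σ, τ) is an apparent pair of ≤ with diam σ = diam τ if and only if: τ is the colexicographically greatest among the cofacets of σ having diameter equal to diam σ, and σ is the colexicographically least among the facets of τ having diameter equal to diam τ. -/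
/-- The diameter of a finite subset of a metric space. -/
noncomputable def fdiam {X : Type*} [MetricSpace X] (S : Finset X) : ℝ :=
  Metric.diam (S : Set X)

/-- The lexicographically refined Vietoris–Rips order on subsets of a finite
linearly ordered metric space: by diameter, then by dimension (cardinality),
then by reverse colexicographic vertex order. -/
def ripsLe {X : Type*} [MetricSpace X] [LinearOrder X] (σ τ : Finset X) : Prop :=
  σ = τ ∨ fdiam σ < fdiam τ ∨ (fdiam σ = fdiam τ ∧ (σ.card < τ.card ∨
    (σ.card = τ.card ∧ toColex τ < toColex σ)))

/-! Both sides contain `diam σ = diam τ`. Under it, facets of `τ` have diameter at most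
`diam σ` and cofacets of `σ` have diameter at least `diam τ`, so each Rips comparison in the
apparent-pair condition is between simplices of equal dimension and reduces to a colex
comparison exactly when the diameters agree. -/

section RipsOrder

variable {X : Type*} [MetricSpace X]

lemma fdiam_mono {σ τ : Finset X} (h : σ ⊆ τ) : fdiam σ ≤ fdiam τ :=
  Metric.diam_mono (Finset.coe_subset.mpr h) τ.finite_toSet.isBounded

variable [LinearOrder X] {σ τ σ' τ' : Finset X}

lemma ripsLe_iff_of_card_eq_of_fdiam_le (hc : σ.card = τ.card) (hd : fdiam σ ≤ fdiam τ) :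
    ripsLe σ τ ↔ (fdiam σ = fdiam τ → toColex τ ≤ toColex σ) := by
  constructor
  · rintro (rfl | hlt | ⟨-, hlt | ⟨-, hlt⟩⟩) heq
    · exact le_rfl
    · exact absurd heq hlt.ne
    · omega
    · exact hlt.le
  · intro h
    rcases hd.lt_or_eq with hlt | heq
    · exact Or.inr (Or.inl hlt)
    · rcases (h heq).lt_or_eq with hlt | hcolex
      · exact Or.inr (Or.inr ⟨heq, Or.inr ⟨hc, hlt⟩⟩)
      · exact Or.inl (toColex_inj.mp hcolex.symm)

lemma ripsLe_cofacet_iff (hd : fdiam σ = fdiam τ) (hτ : τ.card = σ.card + 1) (hs : σ ⊆ τ')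
    (hc : τ'.card = σ.card + 1) :
    ripsLe τ τ' ↔ (fdiam τ' = fdiam σ → toColex τ' ≤ toColex τ) := by
  rw [ripsLe_iff_of_card_eq_of_fdiam_le (by omega) (hd ▸ fdiam_mono hs), ← hd, eq_comm]

lemma ripsLe_facet_iff (hd : fdiam σ = fdiam τ) (hτ : τ.card = σ.card + 1) (hs : σ' ⊆ τ)
    (hc : τ.card = σ'.card + 1) :
    ripsLe σ' σ ↔ (fdiam σ' = fdiam τ → toColex σ ≤ toColex σ') := by
  rw [ripsLe_iff_of_card_eq_of_fdiam_le (by omega) (hd ▸ fdiam_mono hs), hd]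

end RipsOrder

theorem stmt8_general {X : Type*} [MetricSpace X] [LinearOrder X]
    (σ τ : Finset X)
    (hcofacet : σ ⊆ τ ∧ τ.card = σ.card + 1) :
    ((∀ σ' : Finset X, σ'.Nonempty → σ' ⊆ τ → τ.card = σ'.card + 1 → ripsLe σ' σ) ∧
     (∀ τ' : Finset X, σ ⊆ τ' → τ'.card = σ.card + 1 → ripsLe τ τ') ∧
     fdiam σ = fdiam τ)
    ↔
    ((fdiam τ = fdiam σ ∧
      ∀ τ' : Finset X, σ ⊆ τ' → τ'.card = σ.card + 1 → fdiam τ' = fdiam σ →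
        toColex τ' ≤ toColex τ) ∧
     (fdiam σ = fdiam τ ∧
      ∀ σ' : Finset X, σ'.Nonempty → σ' ⊆ τ → τ.card = σ'.card + 1 → fdiam σ' = fdiam τ →
        toColex σ ≤ toColex σ')) := by
  have hτ := hcofacet.2
  constructor
  · rintro ⟨hfacets, hcofacets, hd⟩
    refine ⟨⟨hd.symm, fun τ' hs hc => ?_⟩, hd, fun σ' hne hs hc => ?_⟩
    · exact (ripsLe_cofacet_iff hd hτ hs hc).1 (hcofacets τ' hs hc)
    · exact (ripsLe_facet_iff hd hτ hs hc).1 (hfacets σ' hne hs hc)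
  · rintro ⟨⟨-, hmax⟩, hd, hmin⟩
    refine ⟨fun σ' hne hs hc => ?_, fun τ' hs hc => ?_, hd⟩
    · exact (ripsLe_facet_iff hd hτ hs hc).2 (hmin σ' hne hs hc)
    · exact (ripsLe_cofacet_iff hd hτ hs hc).2 (hmax τ' hs hc)

/-- For the lexicographically refined Vietoris–Rips order, `(σ, τ)` is an
apparent pair with `diam σ = diam τ` if and only if `τ` is the
colexicographically greatest cofacet of `σ` with diameter `diam σ`, and `σ` is
the colexicographically least facet of `τ` with diameter `diam τ`. -/
theorem stmt8 {X : Type*} [Fintype X] [MetricSpace X] [LinearOrder X]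
    (σ τ : Finset X) (hσ : σ.Nonempty)
    (hcofacet : σ ⊆ τ ∧ τ.card = σ.card + 1) :
    ((∀ σ' : Finset X, σ'.Nonempty → σ' ⊆ τ → τ.card = σ'.card + 1 → ripsLe σ' σ) ∧
     (∀ τ' : Finset X, σ ⊆ τ' → τ'.card = σ.card + 1 → ripsLe τ τ') ∧
     fdiam σ = fdiam τ)
    ↔
    ((fdiam τ = fdiam σ ∧
      ∀ τ' : Finset X, σ ⊆ τ' → τ'.card = σ.card + 1 → fdiam τ' = fdiam σ →
        toColex τ' ≤ toColex τ) ∧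
     (fdiam σ = fdiam τ ∧
      ∀ σ' : Finset X, σ'.Nonempty → σ' ⊆ τ → τ.card = σ'.card + 1 → fdiam σ' = fdiam τ →
        toColex σ ≤ toColex σ')) :=
  stmt8_general σ τ hcofacet
end

section
/- Let X be a finite metric space with pairwise distinct distances: whenever e and e′ are distinct 2-element subsets of X, diam e ≠ diam e′. Let ≤ be a linear order on the nonempty subsets of X extending the face relation (σ ⊆ τ implies σ ≤ τ) and refining the diameter order (diam σ < diam τ implies σ < τ). Let σ ⊆ X with |σ| = 2, and let τ be the minimum, with respect to ≤, among the 3-element subsets of X containing σ. If diam τ = diam σ, then (σ, τ) is an apparent pair of ≤: σ is the maximum facet of τ, and τ is the minimum cofacet of σ. -/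
lemma fdiam_mono_s11 {X : Type*} [MetricSpace X] {S T : Finset X} (h : S ⊆ T) :
    fdiam S ≤ fdiam T :=
  Metric.diam_mono (by exact_mod_cast h) T.finite_toSet.isBounded

lemma fdiam_lt_of_subset_of_fdiam_eq {X : Type*} [MetricSpace X]
    (hdist : ∀ e e' : Finset X, e.card = 2 → e'.card = 2 → e ≠ e' → fdiam e ≠ fdiam e')
    {σ σ' τ : Finset X} (hσ : σ.card = 2) (hσ' : σ'.card = 2) (hne : σ' ≠ σ)
    (hsub : σ' ⊆ τ) (hτ : fdiam τ = fdiam σ) :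
    fdiam σ' < fdiam σ :=
  lt_of_le_of_ne (hτ ▸ fdiam_mono_s11 hsub) (hdist σ' σ hσ' hσ hne)

theorem stmt11_general {X : Type*} [MetricSpace X]
    (hdist : ∀ e e' : Finset X, e.card = 2 → e'.card = 2 → e ≠ e' →
      fdiam e ≠ fdiam e')
    (le : Finset X → Finset X → Prop)
    (hrefl : ∀ σ : Finset X, σ.Nonempty → le σ σ)
    (hdiam : ∀ σ τ : Finset X, σ.Nonempty → τ.Nonempty →
      fdiam σ < fdiam τ → le σ τ ∧ ¬ le τ σ)
    (σ τ : Finset X) (hσ : σ.card = 2)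
    (hτ : τ.card = 3 ∧ σ ⊆ τ)
    (hmin : ∀ τ' : Finset X, τ'.card = 3 → σ ⊆ τ' → le τ τ')
    (hzero : fdiam τ = fdiam σ) :
    (∀ σ' : Finset X, σ'.Nonempty → σ' ⊆ τ → τ.card = σ'.card + 1 → le σ' σ) ∧
    (∀ τ' : Finset X, σ ⊆ τ' → τ'.card = σ.card + 1 → le τ τ') := by
  obtain ⟨hτ3, -⟩ := hτ
  have hσne : σ.Nonempty := Finset.card_pos.mp (by omega)
  refine ⟨fun σ' hσ'ne hsub hcard => ?_, fun τ' hsub hcard => hmin τ' (by omega) hsub⟩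
  by_cases h : σ' = σ
  · exact h ▸ hrefl σ hσne
  · exact (hdiam σ' σ hσ'ne hσne
      (fdiam_lt_of_subset_of_fdiam_eq hdist hσ (by omega) h hsub hzero)).1

/-- Let `X` be a finite metric space with pairwise distinct distances and `le`
a linear order on the nonempty subsets of `X` extending the face relation and
refining the diameter order. If `σ` is an edge (a 2-element subset), `τ` is the
minimum 3-element subset containing `σ`, and `diam τ = diam σ`, then `(σ, τ)`
is an apparent pair: `σ` is the maximum facet of `τ` and `τ` is the minimum
cofacet of `σ`. -/
theorem stmt11 {X : Type*} [Fintype X] [MetricSpace X]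
    (hdist : ∀ e e' : Finset X, e.card = 2 → e'.card = 2 → e ≠ e' →
      fdiam e ≠ fdiam e')
    (le : Finset X → Finset X → Prop)
    (hrefl : ∀ σ : Finset X, σ.Nonempty → le σ σ)
    (htrans : ∀ σ τ ρ : Finset X, σ.Nonempty → τ.Nonempty → ρ.Nonempty →
      le σ τ → le τ ρ → le σ ρ)
    (hantisymm : ∀ σ τ : Finset X, σ.Nonempty → τ.Nonempty → le σ τ → le τ σ → σ = τ)
    (htotal : ∀ σ τ : Finset X, σ.Nonempty → τ.Nonempty → le σ τ ∨ le τ σ)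
    (hface : ∀ σ τ : Finset X, σ.Nonempty → τ.Nonempty → σ ⊆ τ → le σ τ)
    (hdiam : ∀ σ τ : Finset X, σ.Nonempty → τ.Nonempty →
      fdiam σ < fdiam τ → le σ τ ∧ ¬ le τ σ)
    (σ τ : Finset X) (hσ : σ.card = 2)
    (hτ : τ.card = 3 ∧ σ ⊆ τ)
    (hmin : ∀ τ' : Finset X, τ'.card = 3 → σ ⊆ τ' → le τ τ')
    (hzero : fdiam τ = fdiam σ) :
    (∀ σ' : Finset X, σ'.Nonempty → σ' ⊆ τ → τ.card = σ'.card + 1 → le σ' σ) ∧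
    (∀ τ' : Finset X, σ ⊆ τ' → τ'.card = σ.card + 1 → le τ τ') :=
  stmt11_general hdist le hrefl hdiam σ τ hσ hτ hmin hzero
end

section
/- Let M be an I × J matrix over a field, where I and J are finite linearly ordered index sets, and suppose no two nonzero columns of M have the same pivot index. Then every column of M is reduced in the following sense: for every j ∈ J with M_j ≠ 0 and every family of scalars (λ_k)_{k ≤ j} with λ_j ≠ 0, the linear combination v = Σ_{k ≤ j} λ_k M_k is nonzero and pivot(v) ≥ pivot(M_j). -/
namespace IsPivot

variable {I F : Type*} [LinearOrder I]

theorem ne_zero [Zero F] {v : I → F} {i : I} (h : IsPivot v i) : v ≠ 0 :=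
  fun hv => h.1 (congrFun hv i)

theorem unique [Zero F] {v : I → F} {i i' : I} (h : IsPivot v i) (h' : IsPivot v i') :
    i = i' :=
  le_antisymm (h'.2 i h.1) (h.2 i' h'.1)

theorem of_mul_left [MulZeroClass F] [NoZeroDivisors F] {a : F} {v : I → F} {i : I}
    (h : IsPivot (fun r => a * v r) i) : IsPivot v i :=
  ⟨right_ne_zero_of_mul h.1, fun i' hi' => h.2 i' (mul_ne_zero (left_ne_zero_of_mul h.1) hi')⟩

end IsPivot

theorem exists_isPivot_sum_of_distinct_pivots {I J F : Type*} [LinearOrder I] [Fintype I]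
    [AddCommMonoid F] (w : J → I → F) (s : Finset J)
    (hdist : ∀ k₁ ∈ s, ∀ k₂ ∈ s, ∀ i, IsPivot (w k₁) i → IsPivot (w k₂) i → k₁ = k₂)
    (hne : ∃ k ∈ s, ∃ i, w k i ≠ 0) :
    ∃ m, IsPivot (fun r => ∑ k ∈ s, w k r) m ∧ ∀ k ∈ s, ∀ i, w k i ≠ 0 → i ≤ m := by
  classical
  set T : Finset I := Finset.univ.filter fun i => ∃ k ∈ s, w k i ≠ 0
  have hT : T.Nonempty := by
    obtain ⟨k, hk, i, hi⟩ := hne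
    exact ⟨i, by simpa [T] using ⟨k, hk, hi⟩⟩
  have hle : ∀ k ∈ s, ∀ i, w k i ≠ 0 → i ≤ T.max' hT := fun k hk i hi =>
    T.le_max' i (by simpa [T] using ⟨k, hk, hi⟩)
  set m := T.max' hT
  obtain ⟨k₀, hk₀, hk₀m⟩ : ∃ k ∈ s, w k m ≠ 0 := by
    simpa [T] using T.max'_mem hT
  have hpiv : ∀ k ∈ s, w k m ≠ 0 → IsPivot (w k) m := fun k hk hkm => ⟨hkm, hle k hk⟩
  have hsum : ∑ k ∈ s, w k m = w k₀ m := by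
    refine Finset.sum_eq_single_of_mem k₀ hk₀ fun k hk hkk₀ => ?_
    by_contra hkm
    exact hkk₀ (hdist k hk k₀ hk₀ m (hpiv k hk hkm) (hpiv k₀ hk₀ hk₀m))
  refine ⟨m, ⟨by simpa only [hsum] using hk₀m, fun i hi => ?_⟩, hle⟩
  obtain ⟨k, hk, hki⟩ := Finset.exists_ne_zero_of_sum_ne_zero hi
  exact hle k hk i hki

/-- If no two nonzero columns of `M` have the same pivot index, then every
column of `M` is reduced: for every `j` with `M_j ≠ 0` and scalars `λ_k`
(`k ≤ j`) with `λ_j ≠ 0`, the combination `v = ∑_{k ≤ j} λ_k M_k` is nonzero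
and `pivot(v) ≥ pivot(M_j)`. -/
theorem stmt16 {F I J : Type*} [Field F] [Fintype I] [Fintype J]
    [LinearOrder I] [LinearOrder J]
    (M : Matrix I J F)
    (hred : ∀ j₁ j₂ i, IsPivot (fun r => M r j₁) i → IsPivot (fun r => M r j₂) i →
      j₁ = j₂) :
    ∀ j : J, (fun r => M r j) ≠ 0 → ∀ lam : J → F, lam j ≠ 0 →
      (fun r => ∑ k ∈ Finset.univ.filter (· ≤ j), lam k * M r k) ≠ 0 ∧
      (∀ i i' : I, IsPivot (fun r => M r j) i →
        IsPivot (fun r => ∑ k ∈ Finset.univ.filter (· ≤ j), lam k * M r k) i' →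
        i ≤ i') := by
  intro j hj lam hlam
  obtain ⟨r, hr⟩ := Function.ne_iff.mp hj
  obtain ⟨m, hm, hle⟩ := exists_isPivot_sum_of_distinct_pivots
    (fun k r => lam k * M r k) (Finset.univ.filter (· ≤ j))
    (fun k₁ _ k₂ _ i h₁ h₂ => hred k₁ k₂ i h₁.of_mul_left h₂.of_mul_left)
    ⟨j, by simp, r, mul_ne_zero hlam hr⟩
  refine ⟨hm.ne_zero, fun i i' hi hi' => ?_⟩
  rw [← hm.unique hi']
  exact hle j (by simp) i (mul_ne_zero hlam hi.1)
end
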